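/- arXiv:1908.04132 — 2 statements merged into one kernel-verified Lean document; each statement's English description precedes it below -/
import Mathlib

section
/- Let 𝒜 be an abelian category. Suppose given ε : C ⟶ A an epimorphism, ι : B ⟶ D a monomorphism, α : A ⟶ B and γ : C ⟶ D such that ε ≫ α ≫ ι = γ. Let P be the pullback of γ along ι, with projections fst : P ⟶ C and snd : P ⟶ B. Then the span (fst ≫ ε, snd) from A to B — which represents the composite of generalized morphisms [ε]⁻¹ ≫ [γ] ≫ [ι]⁻¹ — is stably equivalent to the graph of α: the image of biprod.lift (fst ≫ ε) snd : P ⟶ A ⊞ B equals the image of biprod.lift (𝟙_A) α : A ⟶ A ⊞ B as subobjects of A ⊞ B. -/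
open CategoryTheory CategoryTheory.Limits

theorem imageSubobject_epi_comp {𝒜 : Type*} [Category 𝒜] [Abelian 𝒜]
    {X' X Y : 𝒜} (e : X' ⟶ X) [Epi e] (f : X ⟶ Y) :
    imageSubobject (e ≫ f) = imageSubobject f := by
  refine le_antisymm (imageSubobject_comp_le e f) ?_
  haveI : StrongEpi e := strongEpi_of_epi e
  have sq : CommSq (factorThruImageSubobject (e ≫ f)) e
      ((imageSubobject (e ≫ f)).arrow) f := ⟨by simp⟩
  exact imageSubobject_le f sq.lift sq.fac_right

/-- Given a commutative square `ε ≫ α ≫ ι = γ` with `ε` epi and `ι` mono, the generalized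
morphism `[ε]⁻¹ ≫ [γ] ≫ [ι]⁻¹`, represented by the span `(fst ≫ ε, snd)` on the pullback of
`γ` along `ι`, is stably equivalent to the graph of `α`. -/
theorem lift_colift_formula {𝒜 : Type*} [Category 𝒜] [Abelian 𝒜]
    {A B C D : 𝒜} (ε : C ⟶ A) [Epi ε] (ι : B ⟶ D) [Mono ι]
    (α : A ⟶ B) (γ : C ⟶ D) (h : ε ≫ α ≫ ι = γ) :
    imageSubobject (biprod.lift (pullback.fst γ ι ≫ ε) (pullback.snd γ ι)) =
      imageSubobject (biprod.lift (𝟙 A) α) := by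
  have hsplit : IsSplitEpi (pullback.fst γ ι) :=
    ⟨⟨⟨pullback.lift (𝟙 C) (ε ≫ α) (by simp [← h]), pullback.lift_fst _ _ _⟩⟩⟩
  haveI : Epi (pullback.fst γ ι) := hsplit.epi
  have hsnd : pullback.fst γ ι ≫ ε ≫ α = pullback.snd γ ι := by
    rw [← cancel_mono ι]
    simpa [← h] using pullback.condition (f := γ) (g := ι)
  have key : biprod.lift (pullback.fst γ ι ≫ ε) (pullback.snd γ ι) =
      (pullback.fst γ ι ≫ ε) ≫ biprod.lift (𝟙 A) α := by
    ext <;> simp [hsnd]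
  rw [key, imageSubobject_epi_comp]
end

section
/- Generalized morphism formula for the snake: Let 𝒜 be an abelian category with a snake diagram as follows: f : A ⟶ B, g : B ⟶ C, f' : A' ⟶ B', g' : B' ⟶ C', α : A ⟶ A', β : B ⟶ B', γ : C ⟶ C', with f ≫ β = α ≫ f', g ≫ γ = β ≫ g', the top row exact at B and C with g an epimorphism, and the bottom row exact at A' and B' with f' a monomorphism. Let δ : ker γ ⟶ coker α denote the connecting morphism of the snake lemma (the unique morphism satisfying the pullback–pushout characterization p₁ ≫ δ ≫ j₁ = p₂ ≫ β ≫ j₂). Form P₁, the pullback of kernel.ι γ : ker γ ⟶ C along g : B ⟶ C, with projections p₁ : P₁ ⟶ ker γ and p₂ : P₁ ⟶ B, and P₂, the pullback of p₂ ≫ β : P₁ ⟶ B' along f' : A' ⟶ B', with projections q₁ : P₂ ⟶ P₁ and q₂ : P₂ ⟶ A'. Then the image of biprod.lift (q₁ ≫ p₁) (q₂ ≫ cokernel.π α) : P₂ ⟶ ker γ ⊞ coker α equals the image of biprod.lift (𝟙_{ker γ}) δ : ker γ ⟶ ker γ ⊞ coker α as subobjects of ker γ ⊞ coker α; i.e.,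 [δ] = [η] ≫ [ε]⁻¹ ≫ [β] ≫ [ι]⁻¹ ≫ [ζ] as generalized morphisms, where η, ε, ι, ζ are the kernel embedding of γ, the epimorphism g, the monomorphism f', and the cokernel projection of α. -/
open CategoryTheory CategoryTheory.Limits

/-- In an abelian category, precomposing with an epimorphism does not change the
image subobject. -/
lemma imageSubobject_epi_comp_abelian {𝒜 : Type*} [Category 𝒜] [Abelian 𝒜]
    {X' X Y : 𝒜} (h : X' ⟶ X) [Epi h] (f : X ⟶ Y) :
    imageSubobject (h ≫ f) = imageSubobject f := by
  haveI : StrongEpi (h ≫ factorThruImage f) := strongEpi_of_epi _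
  have comm : (h ≫ factorThruImage f) ≫ image.ι f = h ≫ f := by simp
  exact (Subobject.mk_eq_mk_of_comm (image.ι f) (image.ι (h ≫ f))
    (image.isoStrongEpiMono (h ≫ factorThruImage f) (image.ι f) comm)
    (image.isoStrongEpiMono_hom_comp_ι _ _ comm)).symm

/-- Generalized morphism formula for the snake: the connecting morphism `δ` of the snake
lemma, characterized by `p₁ ≫ δ ≫ j₁ = p₂ ≫ β ≫ j₂`, satisfies
`[δ] = [η] ≫ [ε]⁻¹ ≫ [β] ≫ [ι]⁻¹ ≫ [ζ]` as generalized morphisms, i.e. the associated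
relation of the span obtained from the iterated pullbacks equals the associated relation
of the graph of `δ`. -/
theorem snake_generalized_morphism_formula {𝒜 : Type*} [Category 𝒜] [Abelian 𝒜]
    {A B C A' B' C' : 𝒜}
    (f : A ⟶ B) (g : B ⟶ C) (f' : A' ⟶ B') (g' : B' ⟶ C')
    (α : A ⟶ A') (β : B ⟶ B') (γ : C ⟶ C')
    (h₁ : f ≫ β = α ≫ f') (h₂ : g ≫ γ = β ≫ g')
    (hw : f ≫ g = 0) (hex : imageSubobject f = kernelSubobject g) [Epi g]
    (hw' : f' ≫ g' = 0) (hex' : imageSubobject f' = kernelSubobject g') [Mono f']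
    (δ : kernel γ ⟶ cokernel α)
    (hδ : pullback.fst (kernel.ι γ) g ≫ δ ≫ pushout.inl (cokernel.π α) f' =
      pullback.snd (kernel.ι γ) g ≫ β ≫ pushout.inr (cokernel.π α) f') :
    imageSubobject
        (biprod.lift
          (pullback.fst (pullback.snd (kernel.ι γ) g ≫ β) f' ≫ pullback.fst (kernel.ι γ) g)
          (pullback.snd (pullback.snd (kernel.ι γ) g ≫ β) f' ≫ cokernel.π α)) =
      imageSubobject (biprod.lift (𝟙 (kernel γ)) δ) := by
  set p₁ := pullback.fst (kernel.ι γ) g with hp₁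
  set p₂ := pullback.snd (kernel.ι γ) g with hp₂
  set q₁ := pullback.fst (p₂ ≫ β) f' with hq₁
  set q₂ := pullback.snd (p₂ ≫ β) f' with hq₂
  -- `p₂ ≫ β` kills `g'`
  have hker : (p₂ ≫ β) ≫ g' = 0 := by
    rw [Category.assoc, ← h₂, ← Category.assoc, ← pullback.condition]
    simp [hp₁]
  -- factor `p₂ ≫ β` through `f'` using exactness at `B'`
  have hmk : Subobject.mk f' = Subobject.mk (kernel.ι g') := by
    rw [← imageSubobject_mono f', hex', kernelSubobject]
  let e : A' ≅ kernel g' := Subobject.isoOfMkEqMk f' (kernel.ι g') hmk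
  have he : e.hom ≫ kernel.ι g' = f' := by simp [e]
  let u : pullback (kernel.ι γ) g ⟶ A' := kernel.lift g' (p₂ ≫ β) hker ≫ e.inv
  have hu : u ≫ f' = p₂ ≫ β := by
    have : e.inv ≫ f' = kernel.ι g' := by rw [← he]; simp
    simp [u, Category.assoc, this]
  -- `q₁` is an isomorphism
  haveI : IsIso q₁ := by
    refine ⟨pullback.lift (𝟙 _) u (by simpa using hu.symm), ?_, by rw [hq₁]; exact pullback.lift_fst _ _ _⟩
    apply pullback.hom_ext
    · rw [hq₁, Category.assoc]; exact ((congrArg (pullback.fst (p₂ ≫ β) f' ≫ ·) (pullback.lift_fst _ _ _)).trans (Category.comp_id _)).trans (Category.id_comp _).symm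
    · rw [hq₁]
      simp only [Category.assoc, pullback.lift_snd, Category.comp_id, Category.id_comp]
      rw [← cancel_mono f', Category.assoc, hu, ← pullback.condition]
  -- `p₁` is an epimorphism (pullback of the epi `g`)
  haveI : Epi p₁ := by rw [hp₁]; infer_instance
  haveI : Epi (q₁ ≫ p₁) := epi_comp _ _
  -- key identity: `q₂ ≫ cokernel.π α = q₁ ≫ p₁ ≫ δ`
  haveI : Mono (pushout.inl (cokernel.π α) f') := by infer_instance
  have key : q₂ ≫ cokernel.π α = q₁ ≫ p₁ ≫ δ := by
    rw [← cancel_mono (pushout.inl (cokernel.π α) f')]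
    have h3 : cokernel.π α ≫ pushout.inl (cokernel.π α) f' =
        f' ≫ pushout.inr (cokernel.π α) f' := pushout.condition
    calc (q₂ ≫ cokernel.π α) ≫ pushout.inl (cokernel.π α) f'
        = q₂ ≫ f' ≫ pushout.inr (cokernel.π α) f' := by
          rw [Category.assoc, h3]
      _ = q₁ ≫ (p₂ ≫ β) ≫ pushout.inr (cokernel.π α) f' := by
          rw [← Category.assoc, ← Category.assoc, ← pullback.condition]
      _ = q₁ ≫ p₁ ≫ δ ≫ pushout.inl (cokernel.π α) f' := by
          rw [Category.assoc, ← hδ]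
      _ = (q₁ ≫ p₁ ≫ δ) ≫ pushout.inl (cokernel.π α) f' := by
          simp only [Category.assoc]
  -- rewrite the span as an epi precomposition of the graph of δ
  have hlift : biprod.lift (q₁ ≫ p₁) (q₂ ≫ cokernel.π α) =
      (q₁ ≫ p₁) ≫ biprod.lift (𝟙 (kernel γ)) δ := by
    apply biprod.hom_ext <;> simp [key]
  calc imageSubobject (biprod.lift (q₁ ≫ p₁) (q₂ ≫ cokernel.π α))
      = imageSubobject ((q₁ ≫ p₁) ≫ biprod.lift (𝟙 (kernel γ)) δ) := by rw [hlift]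
    _ = imageSubobject (biprod.lift (𝟙 (kernel γ)) δ) :=
        imageSubobject_epi_comp_abelian _ _
end
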